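/- Let n ≥ 1, let M ∈ ℝ^{n×n} be any matrix, b ∈ ℝⁿ, μ ∈ ℝⁿ, and let S, Σ ∈ ℝ^{n×n} be symmetric positive definite matrices. Then M Σ Mᵀ + S is positive definite and for every y ∈ ℝⁿ, ∫_{ℝⁿ} f(y; M x + b, S) · f(x; μ, Σ) dx = f(y; M μ + b, M Σ Mᵀ + S), where the integral is over x ∈ ℝⁿ with respect to Lebesgue measure. -/

import Mathlib

open MeasureTheory Matrix

lemma cont_quad {n : ℕ} (A : Matrix (Fin n) (Fin n) ℝ) :
    Continuous fun x : Fin n → ℝ => Real.exp (-(1/2 : ℝ) * (x ⬝ᵥ A.mulVec x)) := by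
  apply Real.continuous_exp.comp
  apply continuous_const.mul
  simp only [dotProduct, Matrix.mulVec]
  exact continuous_finset_sum _ fun i _ => (continuous_apply i).mul
    (continuous_finset_sum _ fun j _ => continuous_const.mul (continuous_apply j))

lemma integral_exp_neg_quad {n : ℕ} {A : Matrix (Fin n) (Fin n) ℝ} (hA : A.PosDef) :
    ∫ x : Fin n → ℝ, Real.exp (-(1/2 : ℝ) * (x ⬝ᵥ A.mulVec x)) =
      (2 * Real.pi) ^ ((n : ℝ) / 2) * A.det ^ (-(1 : ℝ) / 2) := by
  have hH := hA.1
  set Q : Matrix (Fin n) (Fin n) ℝ := (Matrix.IsHermitian.eigenvectorUnitary hH : Matrix (Fin n) (Fin n) ℝ) with hQdef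
  have hQunit : Q ∈ Matrix.unitaryGroup (Fin n) ℝ := (Matrix.IsHermitian.eigenvectorUnitary hH).2
  have hQ1 : star Q * Q = 1 := (Matrix.mem_unitaryGroup_iff').mp hQunit
  have hQdet : Q.det * Q.det = 1 := by
    have := congrArg Matrix.det hQ1
    simpa [Matrix.det_mul, Matrix.star_eq_conjTranspose,
      Matrix.conjTranspose_eq_transpose_of_trivial, Matrix.det_transpose] using this
  have hQdet_ne : Q.det ≠ 0 := by
    intro h; rw [h, zero_mul] at hQdet; exact zero_ne_one hQdet
  have habs : |Q.det⁻¹| = 1 := by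
    rcases mul_self_eq_one_iff.mp hQdet with h | h <;> norm_num [h]
  have hmap : Measure.map (Matrix.toLin' Q) volume = volume := by
    rw [Real.map_matrix_volume_pi_eq_smul_volume_pi hQdet_ne, habs]
    simp
  have hcont := cont_quad A
  have hmeas : Measurable (Matrix.toLin' Q) :=
    LinearMap.continuous_of_finiteDimensional (Matrix.toLin' Q) |>.measurable
  have step1 : ∫ v : Fin n → ℝ, Real.exp (-(1/2 : ℝ) * ((Q.mulVec v) ⬝ᵥ A.mulVec (Q.mulVec v)))
      = ∫ x : Fin n → ℝ, Real.exp (-(1/2 : ℝ) * (x ⬝ᵥ A.mulVec x)) := by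
    conv_rhs => rw [← hmap]
    rw [integral_map hmeas.aemeasurable (by rw [hmap]; exact hcont.aestronglyMeasurable)]
    simp [Matrix.toLin'_apply]
  rw [← step1]
  set d : Fin n → ℝ := hH.eigenvalues with hd
  have hdpos : ∀ i, 0 < d i := fun i => hA.eigenvalues_pos i
  have hdiag : star Q * A * Q = Matrix.diagonal d := by
    have h := Matrix.IsHermitian.conjStarAlgAut_star_eigenvectorUnitary hH
    rw [Unitary.conjStarAlgAut_star_apply] at h
    rw [h, RCLike.ofReal_real_eq_id]
    rfl
  have key : ∀ v : Fin n → ℝ, (Q.mulVec v) ⬝ᵥ A.mulVec (Q.mulVec v)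
      = ∑ i, d i * (v i) ^ 2 := by
    intro v
    rw [Matrix.mulVec_mulVec, ← Matrix.vecMul_transpose,
      ← Matrix.dotProduct_mulVec, Matrix.mulVec_mulVec, ← Matrix.mul_assoc]
    rw [show Qᵀ = star Q by
      rw [Matrix.star_eq_conjTranspose, Matrix.conjTranspose_eq_transpose_of_trivial]]
    rw [hdiag]
    simp only [dotProduct, Matrix.mulVec_diagonal, sq]
    exact Finset.sum_congr rfl fun i _ => by ring
  simp_rw [key]
  have expand : ∀ v : Fin n → ℝ, Real.exp (-(1/2 : ℝ) * ∑ i, d i * (v i) ^ 2)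
      = ∏ i, Real.exp (-(d i / 2) * (v i) ^ 2) := by
    intro v
    rw [← Real.exp_sum, Finset.mul_sum]
    congr 1
    apply Finset.sum_congr rfl
    intros; ring
  simp_rw [expand]
  rw [MeasureTheory.volume_pi, MeasureTheory.integral_fintype_prod_eq_prod
    (f := fun i (t : ℝ) => Real.exp (-(d i / 2) * t ^ 2))]
  have hgauss : ∀ i, ∫ t : ℝ, Real.exp (-(d i / 2) * t ^ 2)
      = (2 * Real.pi) ^ ((1 : ℝ)/2) * (d i) ^ (-(1 : ℝ)/2) := by
    intro i
    rw [integral_gaussian]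
    have h1 : Real.pi / (d i / 2) = (2 * Real.pi) * (d i)⁻¹ := by
      field_simp
    rw [h1, Real.sqrt_eq_rpow, Real.mul_rpow (by positivity) (inv_nonneg.mpr (hdpos i).le),
      Real.inv_rpow (hdpos i).le, ← Real.rpow_neg (hdpos i).le]
    norm_num
  simp_rw [hgauss]
  rw [Finset.prod_mul_distrib, Finset.prod_const, Real.finset_prod_rpow _ _
    (fun i _ => le_of_lt (hdpos i)), Finset.card_univ, Fintype.card_fin,
    ← Real.rpow_natCast ((2*Real.pi) ^ ((1:ℝ)/2)) n, ← Real.rpow_mul (by positivity)]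
  have hdet : A.det = ∏ i, d i := by
    have := hH.det_eq_prod_eigenvalues
    simpa using this
  rw [hdet]
  congr 1
  ring


section helpers
variable {n : ℕ}

lemma dot_symm {X : Matrix (Fin n) (Fin n) ℝ} (hX : Xᵀ = X) (a c : Fin n → ℝ) :
    a ⬝ᵥ X *ᵥ c = c ⬝ᵥ X *ᵥ a := by
  calc a ⬝ᵥ X *ᵥ c = (a ᵥ* X) ⬝ᵥ c := Matrix.dotProduct_mulVec _ _ _
    _ = (Xᵀ *ᵥ a) ⬝ᵥ c := by rw [Matrix.mulVec_transpose]
    _ = (X *ᵥ a) ⬝ᵥ c := by rw [hX]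
    _ = c ⬝ᵥ X *ᵥ a := dotProduct_comm _ _

lemma dot_mul_left (M : Matrix (Fin n) (Fin n) ℝ) (z q : Fin n → ℝ) :
    (M *ᵥ z) ⬝ᵥ q = z ⬝ᵥ (Mᵀ *ᵥ q) := by
  calc (M *ᵥ z) ⬝ᵥ q = q ⬝ᵥ (M *ᵥ z) := dotProduct_comm _ _
    _ = (q ᵥ* M) ⬝ᵥ z := Matrix.dotProduct_mulVec _ _ _
    _ = z ⬝ᵥ (q ᵥ* M) := dotProduct_comm _ _
    _ = z ⬝ᵥ (Mᵀ *ᵥ q) := by rw [Matrix.mulVec_transpose]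

lemma woodbury_aux {R : Type*} [Ring R] (M Mt S Si G Gi Ai : R)
    (hS : S * Si = 1) (hG : G * Gi = 1)
    (hA : (Mt * Si * M + Gi) * Ai = 1) :
    (M * G * Mt + S) * (Si - Si * M * Ai * Mt * Si) = 1 := by
  have c0 : M * G * ((Mt * Si * M + Gi) * Ai) = M * G := by rw [hA, mul_one]
  have c1 : M * G * ((Mt * Si * M) * Ai) + M * Ai = M * G := by
    have h : M * G * ((Mt * Si * M) * Ai) + M * (G * Gi) * Ai
        = M * G * ((Mt * Si * M + Gi) * Ai) := by noncomm_ring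
    rw [hG, c0] at h
    simpa using h
  calc (M * G * Mt + S) * (Si - Si * M * Ai * Mt * Si)
      = M * G * (Mt * Si) + S * Si - (M * G * ((Mt * Si * M) * Ai) + M * Ai) * (Mt * Si)
        + M * Ai * (Mt * Si) - S * Si * (M * Ai * (Mt * Si)) := by noncomm_ring
    _ = M * G * (Mt * Si) + 1 - (M * G) * (Mt * Si)
        + M * Ai * (Mt * Si) - 1 * (M * Ai * (Mt * Si)) := by rw [hS, c1]
    _ = 1 := by noncomm_ring

end helpers


/-- The multivariate Gaussian density `f(x; μ, Σ)` on `ℝⁿ` with mean `μ` and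
(positive definite) covariance matrix `Σ`. -/
noncomputable def gaussianDensity {n : ℕ} (μ : Fin n → ℝ) (S : Matrix (Fin n) (Fin n) ℝ)
    (x : Fin n → ℝ) : ℝ :=
  (2 * Real.pi) ^ (-(n : ℝ) / 2) * S.det ^ (-(1 : ℝ) / 2) *
    Real.exp (-(1 / 2) * ((x - μ) ⬝ᵥ S⁻¹.mulVec (x - μ)))

/-- Kalman-filter-style marginalization of a Gaussian conditional model with
affine mean against a Gaussian prior. -/
theorem gaussian_affine_marginalization (n : ℕ) (hn : 1 ≤ n)
    (M : Matrix (Fin n) (Fin n) ℝ) (b μ : Fin n → ℝ)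
    (S Sig : Matrix (Fin n) (Fin n) ℝ) (hS : S.PosDef) (hSig : Sig.PosDef) :
    (M * Sig * Mᵀ + S).PosDef ∧
      ∀ y : Fin n → ℝ,
        (∫ x : Fin n → ℝ, gaussianDensity (M.mulVec x + b) S y * gaussianDensity μ Sig x) =
          gaussianDensity (M.mulVec μ + b) (M * Sig * Mᵀ + S) y := by
  -- conjTranspose = transpose over ℝ
  have hMt : Mᴴ = Mᵀ := Matrix.conjTranspose_eq_transpose_of_trivial M
  have hMtt : (Mᵀ)ᴴ = M := by
    rw [Matrix.conjTranspose_eq_transpose_of_trivial, Matrix.transpose_transpose]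
  -- positive definiteness of the combined matrices
  have hT : (M * Sig * Mᵀ + S).PosDef := by
    refine Matrix.PosDef.posSemidef_add ?_ hS
    have := Matrix.PosSemidef.mul_mul_conjTranspose_same hSig.posSemidef M
    rwa [hMt] at this
  have hA : (Mᵀ * S⁻¹ * M + Sig⁻¹).PosDef := by
    refine Matrix.PosDef.posSemidef_add ?_ hSig.inv
    have := Matrix.PosSemidef.mul_mul_conjTranspose_same hS.inv.posSemidef Mᵀ
    rwa [hMtt] at this
  set A := Mᵀ * S⁻¹ * M + Sig⁻¹ with hAdef
  refine ⟨hT, fun y => ?_⟩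
  -- invertibility facts
  have hSu : IsUnit S.det := isUnit_iff_ne_zero.mpr hS.det_pos.ne'
  have hSigu : IsUnit Sig.det := isUnit_iff_ne_zero.mpr hSig.det_pos.ne'
  have hAu : IsUnit A.det := isUnit_iff_ne_zero.mpr hA.det_pos.ne'
  have hTu : IsUnit (M * Sig * Mᵀ + S).det := isUnit_iff_ne_zero.mpr hT.det_pos.ne'
  have hSS : S * S⁻¹ = 1 := Matrix.mul_nonsing_inv _ hSu
  have hSigSig : Sig * Sig⁻¹ = 1 := Matrix.mul_nonsing_inv _ hSigu
  have hSigSig' : Sig⁻¹ * Sig = 1 := Matrix.nonsing_inv_mul _ hSigu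
  have hAA : A * A⁻¹ = 1 := Matrix.mul_nonsing_inv _ hAu
  -- symmetry facts
  have hSsymm : Sᵀ = S := by
    rw [← Matrix.conjTranspose_eq_transpose_of_trivial]; exact hS.1
  have hSigsymm : Sigᵀ = Sig := by
    rw [← Matrix.conjTranspose_eq_transpose_of_trivial]; exact hSig.1
  have hSIsymm : (S⁻¹)ᵀ = S⁻¹ := by
    rw [Matrix.transpose_nonsing_inv, hSsymm]
  have hSigIsymm : (Sig⁻¹)ᵀ = Sig⁻¹ := by
    rw [Matrix.transpose_nonsing_inv, hSigsymm]
  have hAsymm : Aᵀ = A := by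
    rw [hAdef, Matrix.transpose_add, Matrix.transpose_mul, Matrix.transpose_mul,
      Matrix.transpose_transpose, hSIsymm, hSigIsymm, Matrix.mul_assoc]
  -- Woodbury identity
  have hP : (M * Sig * Mᵀ + S)⁻¹ = S⁻¹ - S⁻¹ * M * A⁻¹ * Mᵀ * S⁻¹ :=
    Matrix.inv_eq_right_inv (woodbury_aux M Mᵀ S S⁻¹ Sig Sig⁻¹ A⁻¹ hSS hSigSig hAA)
  -- determinant identity
  have hdet : (M * Sig * Mᵀ + S).det = S.det * (Sig.det * A.det) := by
    have h1 : M * Sig * Mᵀ + S = S * (S⁻¹ * M * Sig * Mᵀ + 1) := by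
      rw [Matrix.mul_add, Matrix.mul_one, ← Matrix.mul_assoc, ← Matrix.mul_assoc,
        ← Matrix.mul_assoc, hSS, Matrix.one_mul]
    have h2 : Mᵀ * (S⁻¹ * M * Sig) + 1 = A * Sig := by
      rw [hAdef, Matrix.add_mul, hSigSig']
      noncomm_ring
    rw [h1, Matrix.det_mul, Matrix.det_mul_add_one_comm, h2, Matrix.det_mul]
    ring
  -- abbreviations
  obtain ⟨u, hu⟩ : ∃ u, u = y - (M *ᵥ μ + b) := ⟨_, rfl⟩
  obtain ⟨q, hq⟩ : ∃ q, q = S⁻¹ *ᵥ u := ⟨_, rfl⟩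
  obtain ⟨t, ht⟩ : ∃ t, t = Mᵀ *ᵥ q := ⟨_, rfl⟩
  obtain ⟨w, hw⟩ : ∃ w, w = A⁻¹ *ᵥ t := ⟨_, rfl⟩
  have hAw : A *ᵥ w = t := by rw [hw, Matrix.mulVec_mulVec, hAA, Matrix.one_mulVec]
  -- the exponent identity
  have hexp : ∀ x : Fin n → ℝ,
      (y - (M *ᵥ x + b)) ⬝ᵥ S⁻¹ *ᵥ (y - (M *ᵥ x + b)) + (x - μ) ⬝ᵥ Sig⁻¹ *ᵥ (x - μ)
      = (x - (μ + w)) ⬝ᵥ A *ᵥ (x - (μ + w)) + u ⬝ᵥ (M * Sig * Mᵀ + S)⁻¹ *ᵥ u := by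
    intro x
    obtain ⟨z, hz⟩ : ∃ z, z = x - μ := ⟨_, rfl⟩
    have hyx : y - (M *ᵥ x + b) = u - M *ᵥ z := by
      rw [hu, hz, Matrix.mulVec_sub]; abel
    have hxw : x - (μ + w) = z - w := by rw [hz]; abel
    have hMzq : (M *ᵥ z) ⬝ᵥ q = z ⬝ᵥ t := by rw [dot_mul_left, ht]
    have hMzq' : u ⬝ᵥ S⁻¹ *ᵥ (M *ᵥ z) = z ⬝ᵥ t := by
      rw [dot_symm hSIsymm, ← hq, hMzq]
    have eL1 : (u - M *ᵥ z) ⬝ᵥ S⁻¹ *ᵥ (u - M *ᵥ z)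
        = u ⬝ᵥ q - 2 * (z ⬝ᵥ t) + (M *ᵥ z) ⬝ᵥ S⁻¹ *ᵥ (M *ᵥ z) := by
      rw [Matrix.mulVec_sub, dotProduct_sub, sub_dotProduct,
        sub_dotProduct, hMzq', ← hq, hMzq]
      ring
    have eAz : z ⬝ᵥ A *ᵥ z = (M *ᵥ z) ⬝ᵥ S⁻¹ *ᵥ (M *ᵥ z) + z ⬝ᵥ Sig⁻¹ *ᵥ z := by
      rw [hAdef, Matrix.add_mulVec, dotProduct_add]
      congr 1
      rw [← Matrix.mulVec_mulVec, ← Matrix.mulVec_mulVec, ← dot_mul_left M z]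
    have eAzw : z ⬝ᵥ A *ᵥ w = z ⬝ᵥ t := by rw [hAw]
    have eAwz : w ⬝ᵥ A *ᵥ z = z ⬝ᵥ t := by rw [dot_symm hAsymm, hAw]
    have eAww : w ⬝ᵥ A *ᵥ w = w ⬝ᵥ t := by rw [hAw]
    have eR1 : (z - w) ⬝ᵥ A *ᵥ (z - w)
        = (M *ᵥ z) ⬝ᵥ S⁻¹ *ᵥ (M *ᵥ z) + z ⬝ᵥ Sig⁻¹ *ᵥ z - 2 * (z ⬝ᵥ t) + w ⬝ᵥ t := by
      rw [Matrix.mulVec_sub, dotProduct_sub, sub_dotProduct,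
        sub_dotProduct, eAz, eAzw, eAwz, eAww]
      ring
    have eR2 : u ⬝ᵥ (M * Sig * Mᵀ + S)⁻¹ *ᵥ u = u ⬝ᵥ q - w ⬝ᵥ t := by
      rw [hP, Matrix.sub_mulVec, dotProduct_sub]
      congr 1
      · rw [hq]
      · rw [← Matrix.mulVec_mulVec, ← Matrix.mulVec_mulVec, ← Matrix.mulVec_mulVec,
          ← Matrix.mulVec_mulVec, ← hq, ← ht, ← hw, dot_symm hSIsymm, dot_mul_left, ← hq, ← ht]
    rw [hyx, hxw, eL1, eR1, eR2, hz]
    ring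
  -- rewrite the integrand pointwise
  have hTP : (M * Sig * Mᵀ + S)⁻¹ = (M * Sig * Mᵀ + S)⁻¹ := rfl
  obtain ⟨K, hK⟩ : ∃ K : ℝ, K = (2 * Real.pi) ^ (-(n:ℝ)/2) * S.det ^ (-(1:ℝ)/2)
      * ((2 * Real.pi) ^ (-(n:ℝ)/2) * Sig.det ^ (-(1:ℝ)/2))
      * Real.exp (-(1/2) * (u ⬝ᵥ (M * Sig * Mᵀ + S)⁻¹ *ᵥ u)) := ⟨_, rfl⟩
  have hpoint : ∀ x : Fin n → ℝ,
      gaussianDensity (M.mulVec x + b) S y * gaussianDensity μ Sig x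
      = K * Real.exp (-(1/2) * ((x - (μ + w)) ⬝ᵥ A *ᵥ (x - (μ + w)))) := by
    intro x
    have hE := hexp x
    simp only [gaussianDensity]
    rw [hK, mul_mul_mul_comm, ← Real.exp_add, ← mul_add, hE, mul_add, Real.exp_add]
    ring
  simp_rw [hpoint]
  rw [MeasureTheory.integral_const_mul]
  have htrans : ∫ x : Fin n → ℝ, Real.exp (-(1/2 : ℝ) * ((x - (μ + w)) ⬝ᵥ A *ᵥ (x - (μ + w))))
      = ∫ x : Fin n → ℝ, Real.exp (-(1/2 : ℝ) * (x ⬝ᵥ A *ᵥ x)) :=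
    MeasureTheory.integral_sub_right_eq_self
      (fun v => Real.exp (-(1/2 : ℝ) * (v ⬝ᵥ A *ᵥ v))) (μ + w)
  rw [htrans, integral_exp_neg_quad hA]
  -- final constants
  simp only [gaussianDensity, hK, ← hu]
  rw [hdet]
  have h2pi : (0:ℝ) < 2 * Real.pi := by positivity
  rw [Real.mul_rpow (le_of_lt hS.det_pos) (le_of_lt (mul_pos hSig.det_pos hA.det_pos)),
    Real.mul_rpow (le_of_lt hSig.det_pos) (le_of_lt hA.det_pos)]
  have e2 : ((2*Real.pi) ^ (-(n:ℝ)/2)) * ((2*Real.pi) ^ (-(n:ℝ)/2)) * ((2*Real.pi) ^ ((n:ℝ)/2))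
      = (2*Real.pi) ^ (-(n:ℝ)/2) := by
    rw [← Real.rpow_add h2pi, ← Real.rpow_add h2pi]
    congr 1
    ring
  linear_combination (S.det ^ (-(1:ℝ)/2) * Sig.det ^ (-(1:ℝ)/2) * A.det ^ (-(1:ℝ)/2) *
    Real.exp (-(1/2) * (u ⬝ᵥ (M * Sig * Mᵀ + S)⁻¹ *ᵥ u))) * e2
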